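/- arXiv:2603.29463 — 2 statements merged into one kernel-verified Lean document; each statement's English description precedes it below -/
import Mathlib

section
/- Let (X, 𝒜, μ) be a σ-finite measure space, let λ > 0, and let f, g : X → ℝ≥0 be measurable probability densities with respect to μ such that ∫ f^{1+λ} dμ and ∫ g^{1+λ} dμ are finite. Then the density-power divergence (1/(1+λ)) · ∫ { f^{1+λ} − (1 + 1/λ) f^λ g + (1/λ) g^{1+λ} } dμ is nonnegative, and it equals 0 if and only if f = g μ-almost everywhere. -/
open MeasureTheory ENNReal

private lemma dpd_key_t {lam : ℝ} (hlam : 0 < lam) {t : ℝ} (ht : 0 ≤ t) (ht1 : t ≠ 1) :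
    (1 + 1 / lam) * t ^ lam < t ^ (1 + lam) + 1 / lam := by
  have hp : 1 < (1 + lam) / lam := by
    rw [lt_div_iff₀ hlam]; linarith
  have hs : -1 ≤ t ^ lam - 1 := by
    have : (0:ℝ) ≤ t ^ lam := Real.rpow_nonneg ht _
    linarith
  have hs' : t ^ lam - 1 ≠ 0 := by
    have : t ^ lam ≠ 1 := by
      rcases lt_or_gt_of_ne ht1 with h | h
      · exact ne_of_lt (by simpa using Real.rpow_lt_rpow ht h hlam)
      · exact ne_of_gt (by simpa using Real.rpow_lt_rpow (by norm_num) h hlam)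
    intro h; exact this (by linarith)
  have hbern := one_add_mul_self_lt_rpow_one_add hs hs' hp
  have h2 : (1 + (t ^ lam - 1)) ^ ((1 + lam) / lam) = t ^ (1 + lam) := by
    rw [show (1:ℝ) + (t ^ lam - 1) = t ^ lam by ring, ← Real.rpow_mul ht]
    congr 1
    field_simp
  rw [h2] at hbern
  have h3 : 1 + (1 + lam) / lam * (t ^ lam - 1) = (1 + 1/lam) * t ^ lam - 1/lam := by
    field_simp; ring
  linarith [h3 ▸ hbern]

/-- expression is zero on the diagonal -/
private lemma dpd_key_eq {lam : ℝ} (hlam : 0 < lam) {a : ℝ} (ha : 0 ≤ a) :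
    a ^ (1 + lam) - (1 + 1 / lam) * a ^ lam * a + (1 / lam) * a ^ (1 + lam) = 0 := by
  rcases eq_or_lt_of_le ha with h | h
  · rw [← h, Real.zero_rpow (by positivity), Real.zero_rpow hlam.ne']
    ring
  · have h1 : a ^ (1 + lam) = a * a ^ lam := by
      rw [Real.rpow_add h, Real.rpow_one]
    rw [h1]
    field_simp
    ring

/-- strict positivity off the diagonal -/
private lemma dpd_key_pos {lam : ℝ} (hlam : 0 < lam) {a b : ℝ} (ha : 0 ≤ a) (hb : 0 ≤ b)
    (hab : a ≠ b) :
    0 < a ^ (1 + lam) - (1 + 1 / lam) * a ^ lam * b + (1 / lam) * b ^ (1 + lam) := by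
  rcases eq_or_lt_of_le hb with h | hbpos
  · rw [← h, Real.zero_rpow (by positivity), mul_zero, mul_zero]
    have : 0 < a := lt_of_le_of_ne ha (fun e => hab (e ▸ h.symm ▸ rfl))
    simpa using Real.rpow_pos_of_pos this (1 + lam)
  · set t := a / b with hT
    have ht : 0 ≤ t := div_nonneg ha hbpos.le
    have ht1 : t ≠ 1 := by
      rw [hT, Ne, div_eq_one_iff_eq hbpos.ne']
      exact hab
    have key := dpd_key_t hlam ht ht1
    have hbp : 0 < b ^ (1 + lam) := Real.rpow_pos_of_pos hbpos _
    have hmul := (mul_lt_mul_of_pos_right key hbp)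
    have e1 : t ^ (1 + lam) * b ^ (1 + lam) = a ^ (1 + lam) := by
      rw [hT, Real.div_rpow ha hbpos.le, div_mul_cancel₀ _ hbp.ne']
    have e2 : t ^ lam * b ^ (1 + lam) = a ^ lam * b := by
      rw [hT, Real.div_rpow ha hbpos.le, Real.rpow_add hbpos, Real.rpow_one]
      field_simp [(Real.rpow_pos_of_pos hbpos lam).ne']
    have e3 : (1 + 1 / lam) * t ^ lam * b ^ (1 + lam)
        = (1 + 1 / lam) * (a ^ lam * b) := by rw [mul_assoc, e2]
    nlinarith [hmul, e1, e3]

private lemma dpd_key_nonneg {lam : ℝ} (hlam : 0 < lam) {a b : ℝ} (ha : 0 ≤ a) (hb : 0 ≤ b) :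
    0 ≤ a ^ (1 + lam) - (1 + 1 / lam) * a ^ lam * b + (1 / lam) * b ^ (1 + lam) := by
  rcases eq_or_ne a b with rfl | h
  · exact (dpd_key_eq hlam ha).ge
  · exact (dpd_key_pos hlam ha hb h).le

/-- **Nonnegativity of the density-power divergence.** For probability densities `f, g` w.r.t.
a σ-finite measure `μ` and a tuning parameter `λ > 0`, with `∫ f^(1+λ)` and `∫ g^(1+λ)` finite,
the density-power divergence
`(1/(1+λ)) ∫ { f^(1+λ) − (1 + 1/λ) f^λ g + (1/λ) g^(1+λ) } dμ`
is nonnegative, and it vanishes iff `f = g` μ-a.e. -/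
theorem density_power_divergence_nonneg
    {X : Type*} [MeasurableSpace X] (μ : Measure X) [SigmaFinite μ]
    (lam : ℝ) (hlam : 0 < lam) (f g : X → NNReal)
    (hf : Measurable f) (hg : Measurable g)
    (hf1 : ∫⁻ x, (f x : ℝ≥0∞) ∂μ = 1) (hg1 : ∫⁻ x, (g x : ℝ≥0∞) ∂μ = 1)
    (hfp : ∫⁻ x, (f x : ℝ≥0∞) ^ (1 + lam) ∂μ < ⊤)
    (hgp : ∫⁻ x, (g x : ℝ≥0∞) ^ (1 + lam) ∂μ < ⊤) :
    (0 ≤ (1 / (1 + lam)) *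
        ∫ x, ((f x : ℝ) ^ (1 + lam) - (1 + 1 / lam) * (f x : ℝ) ^ lam * (g x : ℝ)
          + (1 / lam) * (g x : ℝ) ^ (1 + lam)) ∂μ)
    ∧ ((1 / (1 + lam)) *
        (∫ x, ((f x : ℝ) ^ (1 + lam) - (1 + 1 / lam) * (f x : ℝ) ^ lam * (g x : ℝ)
          + (1 / lam) * (g x : ℝ) ^ (1 + lam)) ∂μ) = 0
      ↔ f =ᵐ[μ] g) := by
  set φ : X → ℝ := fun x => (f x : ℝ) ^ (1 + lam) - (1 + 1 / lam) * (f x : ℝ) ^ lam * (g x : ℝ)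
      + (1 / lam) * (g x : ℝ) ^ (1 + lam) with hφ
  have hφ0 : ∀ x, 0 ≤ φ x := fun x =>
    dpd_key_nonneg hlam (f x).coe_nonneg (g x).coe_nonneg
  -- integrability of the rpow pieces
  have hmf : Measurable (fun x => (f x : ℝ) ^ (1 + lam)) :=
    (Real.continuous_rpow_const (by positivity)).measurable.comp hf.coe_nnreal_real
  have hmg : Measurable (fun x => (g x : ℝ) ^ (1 + lam)) :=
    (Real.continuous_rpow_const (by positivity)).measurable.comp hg.coe_nnreal_real
  have hmfl : Measurable (fun x => (f x : ℝ) ^ lam) :=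
    (Real.continuous_rpow_const hlam.le).measurable.comp hf.coe_nnreal_real
  have hIf : Integrable (fun x => (f x : ℝ) ^ (1 + lam)) μ := by
    refine ⟨hmf.aestronglyMeasurable, ?_⟩
    rw [hasFiniteIntegral_def]
    have : ∀ x, (‖(f x : ℝ) ^ (1 + lam)‖₊ : ℝ≥0∞) = (f x : ℝ≥0∞) ^ (1 + lam) := by
      intro x
      rw [Real.nnnorm_rpow_of_nonneg (f x).coe_nonneg, ← ENNReal.coe_rpow_of_nonneg _ (by positivity)]
      simp
    simpa only [enorm_eq_nnnorm, this] using hfp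
  have hIg : Integrable (fun x => (g x : ℝ) ^ (1 + lam)) μ := by
    refine ⟨hmg.aestronglyMeasurable, ?_⟩
    rw [hasFiniteIntegral_def]
    have : ∀ x, (‖(g x : ℝ) ^ (1 + lam)‖₊ : ℝ≥0∞) = (g x : ℝ≥0∞) ^ (1 + lam) := by
      intro x
      rw [Real.nnnorm_rpow_of_nonneg (g x).coe_nonneg, ← ENNReal.coe_rpow_of_nonneg _ (by positivity)]
      simp
    simpa only [enorm_eq_nnnorm, this] using hgp
  have hIfg : Integrable (fun x => (f x : ℝ) ^ lam * (g x : ℝ)) μ := by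
    refine Integrable.mono' (hIf.add (hIg.const_mul (1 / lam)))
      (hmfl.mul hg.coe_nnreal_real).aestronglyMeasurable
      (Filter.Eventually.of_forall fun x => ?_)
    have h0 := hφ0 x
    rw [hφ] at h0
    simp only at h0
    have hnn : 0 ≤ (f x : ℝ) ^ lam * (g x : ℝ) :=
      mul_nonneg (Real.rpow_nonneg (f x).coe_nonneg _) (g x).coe_nonneg
    rw [Real.norm_of_nonneg hnn]
    have hl : (1:ℝ) ≤ 1 + 1 / lam := by
      have : 0 < 1 / lam := by positivity
      linarith
    have h2 : (f x : ℝ) ^ lam * (g x : ℝ) ≤ (1 + 1 / lam) * ((f x : ℝ) ^ lam * (g x : ℝ)) :=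
      le_mul_of_one_le_left hnn hl
    simp only [Pi.add_apply]
    nlinarith [h0, hnn, h2]
  have hIφ : Integrable φ μ := by
    have hI := (hIf.sub (hIfg.const_mul (1 + 1 / lam))).add (hIg.const_mul (1 / lam))
    refine hI.congr (Filter.Eventually.of_forall fun x => ?_)
    simp only [hφ, Pi.add_apply, Pi.sub_apply]
    ring
  have hint0 : (∫ x, φ x ∂μ) = 0 ↔ φ =ᵐ[μ] 0 :=
    integral_eq_zero_iff_of_nonneg hφ0 hIφ
  constructor
  · exact mul_nonneg (by positivity) (integral_nonneg hφ0)
  · rw [mul_eq_zero]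
    constructor
    · rintro (h | h)
      · exact absurd h (by positivity)
      · have := hint0.mp h
        filter_upwards [this] with x hx
        by_contra hne
        have : (f x : ℝ) ≠ (g x : ℝ) := fun e => hne (NNReal.coe_injective e)
        exact absurd hx (dpd_key_pos hlam (f x).coe_nonneg (g x).coe_nonneg this).ne'
    · intro h
      right
      rw [hint0]
      filter_upwards [h] with x hx
      have : φ x = 0 := by
        simp only [hφ, hx]
        exact dpd_key_eq hlam (g x).coe_nonneg
      simpa using this
end

section
/- Let d ≥ 1 and let Σ and Σ_m be real symmetric positive definite d × d matrices. Set V := Σ^{−1/2} Σ_m Σ^{−1/2}, where Σ^{−1/2} is the inverse of the positive definite square root of Σ. Then, as λ → 0 from the right, (2π)^{−λd/2} · [ (1/(λ+1)^{1+d/2}) · ( (det Σ)^{−λ/2} − (det Σ_m)^{−λ/2} ) + (1/λ) · ( (det Σ_m)^{−λ/2} · det(λ V⁻¹ + I_d)^{−1/2} − (det Σ)^{−λ/2} · (λ+1)^{−d/2} ) ] converges to −(1/2) · ( log(det Σ_m / det Σ) + trace(Σ_m⁻¹ Σ) − d ). -/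
open Matrix Filter Real

section PosSemidefSqrt

open scoped ComplexOrder

/-- The square root of a positive semidefinite matrix (as in the older Mathlib). -/
noncomputable def Matrix.PosSemidef.sqrt {n 𝕜 : Type*} [Fintype n] [DecidableEq n] [RCLike 𝕜]
    {A : Matrix n n 𝕜} (hA : A.PosSemidef) : Matrix n n 𝕜 :=
  (hA.1.eigenvectorUnitary : Matrix n n 𝕜) *
    diagonal (((↑) : ℝ → 𝕜) ∘ Real.sqrt ∘ hA.1.eigenvalues) *
    (star hA.1.eigenvectorUnitary : Matrix n n 𝕜)

end PosSemidefSqrt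

open scoped ComplexOrder in
theorem Matrix.PosSemidef.sqrt_mul_self {n 𝕜 : Type*} [Fintype n] [DecidableEq n] [RCLike 𝕜]
    {A : Matrix n n 𝕜} (hA : A.PosSemidef) : hA.sqrt * hA.sqrt = A := by
  have hU : (star hA.1.eigenvectorUnitary : Matrix n n 𝕜) *
      (hA.1.eigenvectorUnitary : Matrix n n 𝕜) = 1 := Unitary.coe_star_mul_self _
  conv_rhs => rw [hA.1.spectral_theorem, Unitary.conjStarAlgAut_apply]
  unfold Matrix.PosSemidef.sqrt
  simp only [Matrix.mul_assoc]
  rw [← Matrix.mul_assoc (star _ : Matrix n n 𝕜) (_ : Matrix n n 𝕜), hU, Matrix.one_mul,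
    ← Matrix.mul_assoc (diagonal _), diagonal_mul_diagonal]
  congr 3
  funext i
  simp only [Function.comp_apply]
  rw [← RCLike.ofReal_mul, Real.mul_self_sqrt (hA.eigenvalues_nonneg i)]

/-- **λ → 0 limit of the density-power limiting criterion integrand.** With `Σ` (here `S`)
the true diffusion matrix, `Σ_m` (here `Sm`) the candidate matrix, and
`V = Σ^{-1/2} Σ_m Σ^{-1/2}`, as `λ → 0+`,
`(2π)^{−λd/2} [ (λ+1)^{−(1+d/2)} ((det Σ)^{−λ/2} − (det Σ_m)^{−λ/2})`
`  + λ⁻¹ ((det Σ_m)^{−λ/2} det(λV⁻¹+I)^{−1/2} − (det Σ)^{−λ/2}(λ+1)^{−d/2}) ]`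
converges to `−(1/2)(log(det Σ_m/det Σ) + trace(Σ_m⁻¹ Σ) − d)`. -/
theorem density_power_criterion_limit
    (d : ℕ) (hd : 1 ≤ d) (S Sm : Matrix (Fin d) (Fin d) ℝ)
    (hS : S.PosDef) (hSm : Sm.PosDef) :
    Tendsto (fun lam : ℝ =>
      (2 * π) ^ (-(lam * (d : ℝ)) / 2) *
        ((1 / (lam + 1) ^ (1 + (d : ℝ) / 2)) * (S.det ^ (-lam / 2) - Sm.det ^ (-lam / 2))
          + (1 / lam) *
            (Sm.det ^ (-lam / 2) *
                ((lam • ((hS.posSemidef.sqrt)⁻¹ * Sm * (hS.posSemidef.sqrt)⁻¹)⁻¹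
                  + 1).det) ^ (-(1 : ℝ) / 2)
              - S.det ^ (-lam / 2) * (lam + 1) ^ (-(d : ℝ) / 2))))
      (nhdsWithin 0 (Set.Ioi 0))
      (nhds (-(1 / 2) * (Real.log (Sm.det / S.det) + (Sm⁻¹ * S).trace - d))) := by
  have ha : (0:ℝ) < S.det := hS.det_pos
  have hb : (0:ℝ) < Sm.det := hSm.det_pos
  set P : Matrix (Fin d) (Fin d) ℝ := hS.posSemidef.sqrt with hPdef
  have hPP : P * P = S := hS.posSemidef.sqrt_mul_self
  have hdetP : P.det * P.det = S.det := by rw [← Matrix.det_mul, hPP]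
  have hdP : IsUnit P.det := by
    refine isUnit_iff_ne_zero.2 fun h => ?_
    rw [h, mul_zero] at hdetP
    exact ha.ne' hdetP.symm
  set M : Matrix (Fin d) (Fin d) ℝ := (P⁻¹ * Sm * P⁻¹)⁻¹ with hMdef
  have htr : M.trace = (Sm⁻¹ * S).trace := by
    rw [hMdef, Matrix.mul_inv_rev, Matrix.mul_inv_rev,
      Matrix.nonsing_inv_nonsing_inv _ hdP, Matrix.trace_mul_comm, mul_assoc, hPP]
  set τ : ℝ := M.trace with hτdef
  -- the polynomial remainder
  set q : Polynomial ℝ := (Matrix.det (1 + (Polynomial.X : Polynomial ℝ) • M.map Polynomial.C)).divX.divX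
    with hqdef
  have hdet : ∀ x : ℝ, (x • M + 1).det = 1 + τ * x + q.eval x * x^2 := fun x => by
    rw [add_comm, Matrix.det_one_add_smul]
  -- derivative of the determinant function at 0
  have hp : HasDerivAt (fun x : ℝ => (x • M + 1).det) τ 0 := by
    have h1 : HasDerivAt (fun x : ℝ => 1 + τ * x + q.eval x * x ^ 2) τ 0 := by
      have h2 := ((hasDerivAt_const (0:ℝ) (1:ℝ)).add
          (((hasDerivAt_id (0:ℝ)).const_mul τ))).add
          ((q.hasDerivAt 0).mul (hasDerivAt_pow 2 (0:ℝ)))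
      refine h2.congr_deriv ?_
      norm_num
    exact h1.congr_of_eventuallyEq (Filter.Eventually.of_forall fun x => hdet x)
  have h_one : (((0:ℝ) • M + 1) : Matrix (Fin d) (Fin d) ℝ).det = 1 := by simp
  -- derivative of det-power factor
  have hF2 : HasDerivAt (fun x : ℝ => ((x • M + 1).det) ^ (-(1:ℝ)/2)) (-τ/2) 0 := by
    have := hp.rpow_const (p := -(1:ℝ)/2) (Or.inl (by rw [h_one]; norm_num))
    rw [h_one] at this
    convert this using 1
    rw [Real.one_rpow]
    ring
  -- derivative of b^(-x/2)
  have hFb : HasDerivAt (fun x : ℝ => Sm.det ^ (-x/2)) (-Real.log Sm.det / 2) 0 := by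
    have hin : HasDerivAt (fun x : ℝ => -x/2) (-1/2 : ℝ) 0 := by
      simpa using ((hasDerivAt_id (0:ℝ)).neg.div_const 2)
    have := ((Real.hasStrictDerivAt_const_rpow hb ((-(0:ℝ))/2)).hasDerivAt).comp 0 hin
    refine this.congr_deriv ?_
    norm_num [Real.rpow_zero]
    ring
  have hGa : HasDerivAt (fun x : ℝ => S.det ^ (-x/2)) (-Real.log S.det / 2) 0 := by
    have hin : HasDerivAt (fun x : ℝ => -x/2) (-1/2 : ℝ) 0 := by
      simpa using ((hasDerivAt_id (0:ℝ)).neg.div_const 2)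
    have := ((Real.hasStrictDerivAt_const_rpow ha ((-(0:ℝ))/2)).hasDerivAt).comp 0 hin
    refine this.congr_deriv ?_
    norm_num [Real.rpow_zero]
    ring
  have hG2 : HasDerivAt (fun x : ℝ => (x + 1) ^ (-(d:ℝ)/2)) (-(d:ℝ)/2) 0 := by
    have := ((hasDerivAt_id (0:ℝ)).add_const 1).rpow_const (p := -(d:ℝ)/2)
      (Or.inl (by norm_num))
    refine this.congr_deriv ?_
    norm_num
  -- the function H and its derivative
  set H : ℝ → ℝ := fun x => Sm.det ^ (-x/2) * ((x • M + 1).det) ^ (-(1:ℝ)/2)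
      - S.det ^ (-x/2) * (x + 1) ^ (-(d:ℝ)/2) with hHdef
  set L : ℝ := -(1 / 2) * (Real.log (Sm.det / S.det) + (Sm⁻¹ * S).trace - d) with hLdef
  have hH : HasDerivAt H L 0 := by
    have := (hFb.mul hF2).sub (hGa.mul hG2)
    refine this.congr_deriv ?_
    rw [hLdef, ← htr, h_one, Real.one_rpow, Real.log_div hb.ne' ha.ne']
    norm_num [Real.rpow_zero]
    ring
  have hH0 : H 0 = 0 := by
    rw [hHdef]
    norm_num [h_one, Real.one_rpow, Real.rpow_zero]
  have hslope : Tendsto (slope H 0) (nhdsWithin 0 (Set.Ioi 0)) (nhds L) :=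
    (hasDerivAt_iff_tendsto_slope.mp hH).mono_left
      (nhdsWithin_mono 0 (fun x hx => Set.mem_compl_singleton_iff.2 (ne_of_gt hx)))
  -- the prefactor tends to 1
  have hc : Tendsto (fun lam : ℝ => (2 * π : ℝ) ^ (-(lam * (d:ℝ)) / 2))
      (nhdsWithin 0 (Set.Ioi 0)) (nhds 1) := by
    have hcont : ContinuousAt (fun lam : ℝ => (2 * π : ℝ) ^ (-(lam * (d:ℝ)) / 2)) 0 := by
      exact (Real.continuousAt_const_rpow (by positivity)).comp (by fun_prop)
    have := hcont.tendsto.mono_left (nhdsWithin_le_nhds (s := Set.Ioi (0:ℝ)))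
    simpa using this
  -- the first bracket term tends to 0
  have hA : Tendsto (fun lam : ℝ =>
      (1 / (lam + 1) ^ (1 + (d : ℝ) / 2)) * (S.det ^ (-lam / 2) - Sm.det ^ (-lam / 2)))
      (nhdsWithin 0 (Set.Ioi 0)) (nhds 0) := by
    have hcont : ContinuousAt (fun lam : ℝ =>
        (1 / (lam + 1) ^ (1 + (d : ℝ) / 2)) * (S.det ^ (-lam / 2) - Sm.det ^ (-lam / 2))) 0 := by
      apply ContinuousAt.mul
      · apply ContinuousAt.div continuousAt_const
        · exact (continuousAt_id.add continuousAt_const).rpow_const (Or.inl (by norm_num))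
        · norm_num
      · exact ((Real.continuousAt_const_rpow ha.ne').comp (by fun_prop)).sub
          ((Real.continuousAt_const_rpow hb.ne').comp (by fun_prop))
    have := hcont.tendsto.mono_left (nhdsWithin_le_nhds (s := Set.Ioi (0:ℝ)))
    simpa using this
  have key := hc.mul (hA.add hslope)
  rw [one_mul, zero_add] at key
  refine key.congr' ?_
  filter_upwards [self_mem_nhdsWithin] with x hx
  have hxne : x ≠ 0 := ne_of_gt hx
  rw [slope_def_field, hH0, sub_zero, sub_zero, hHdef]
  field_simp
end
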